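/- Let 0 < β < 1, c > 0, δ ≥ 0, and define g(r) = e^{−c r^β} r^{−δ} for r ≥ 1. Then there is a constant c₁ > 0 such that for all x ∈ ℝ^d with |x| ≥ 2 one has ∫_{|y|>|x|/2, |x−y|>|x|/2} g(|x−y|) g(|y|) dy ≤ c₁ e^{−c(1−β)(|x|/2)^β} · g(|x|). -/

import Mathlib

open MeasureTheory Real

/-!
Concavity of `t ↦ t ^ β` gives `a ^ β + b ^ β ≥ (a + b) ^ β + (2 - 2 ^ β) * min a b ^ β`, and
`2 - 2 ^ β = (1 - β) + ε` with `ε = 1 + β - 2 ^ β > 0`. On the domain of integration both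
`‖y‖` and `‖x - y‖` exceed `‖x‖ / 2` and their sum is at least `‖x‖`, so the `(1 - β)` part
yields the factor `exp (-c (1 - β) (‖x‖ / 2) ^ β) * exp (-c ‖x‖ ^ β)`, while the `ε` part leaves
`exp (-c ε min ^ β) ≤ exp (-c ε ‖y‖ ^ β) + exp (-c ε ‖x - y‖ ^ β)`, which is integrable. The power
factors are at most `2 ^ δ * ‖x‖ ^ (-δ)` because both radii are at least `‖x‖ / 2 ≥ 1`.
-/

theorem ConcaveOn.map_add_sub_map_le {s : Set ℝ} {f : ℝ → ℝ} (hf : ConcaveOn ℝ s f)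
    {x y h : ℝ} (hx : x ∈ s) (hyh : y + h ∈ s) (hxy : x ≤ y) (hh : 0 ≤ h) :
    f (y + h) - f y ≤ f (x + h) - f x := by
  rcases (show x ≤ y + h by linarith).eq_or_lt with hxyh | hxyh
  · obtain rfl : y = x := by linarith
    obtain rfl : h = 0 := by linarith
    simp
  -- `x + h` and `y` are the two convex combinations of `x` and `y + h` with swapped weights.
  have hL : y + h - x ≠ 0 := by linarith
  have hw₁ : 0 ≤ (y - x) / (y + h - x) := div_nonneg (by linarith) (by linarith)
  have hw₂ : 0 ≤ h / (y + h - x) := div_nonneg hh (by linarith)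
  have hsum : (y - x) / (y + h - x) + h / (y + h - x) = 1 := by field_simp; ring
  have h₁ := hf.2 hx hyh hw₁ hw₂ hsum
  have h₂ := hf.2 hx hyh hw₂ hw₁ (by rw [add_comm, hsum])
  simp only [smul_eq_mul] at h₁ h₂
  have e₁ : (y - x) / (y + h - x) * x + h / (y + h - x) * (y + h) = x + h := by
    field_simp; ring
  have e₂ : h / (y + h - x) * x + (y - x) / (y + h - x) * (y + h) = y := by
    field_simp; ring
  rw [e₁] at h₁
  rw [e₂] at h₂
  have h₃ : ((y - x) / (y + h - x) + h / (y + h - x)) * (f x + f (y + h)) ≤ f (x + h) + f y := by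
    linarith
  rw [hsum, one_mul] at h₃
  linarith

theorem add_rpow_le_rpow_add_two_rpow_sub_one_mul {β a b : ℝ} (hβ0 : 0 ≤ β) (hβ1 : β ≤ 1)
    (ha : 0 ≤ a) (hab : a ≤ b) :
    (a + b) ^ β ≤ b ^ β + (2 ^ β - 1) * a ^ β := by
  have h := (concaveOn_rpow hβ0 hβ1).map_add_sub_map_le ha (by simp; linarith) hab ha
  rw [← two_mul, mul_rpow zero_le_two ha] at h
  rw [add_comm a b]
  linarith

theorem add_rpow_add_mul_min_rpow_le {β a b : ℝ} (hβ0 : 0 ≤ β) (hβ1 : β ≤ 1)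
    (ha : 0 ≤ a) (hb : 0 ≤ b) :
    (a + b) ^ β + (2 - 2 ^ β) * min a b ^ β ≤ a ^ β + b ^ β := by
  rcases le_total a b with hab | hba
  · have := add_rpow_le_rpow_add_two_rpow_sub_one_mul hβ0 hβ1 ha hab
    rw [min_eq_left hab]
    linarith
  · have := add_rpow_le_rpow_add_two_rpow_sub_one_mul hβ0 hβ1 hb hba
    rw [min_eq_right hba, add_comm a b]
    linarith

theorem two_rpow_lt_one_add {β : ℝ} (hβ0 : 0 < β) (hβ1 : β < 1) : (2 : ℝ) ^ β < 1 + β := by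
  simpa [one_add_one_eq_two] using
    rpow_one_add_lt_one_add_mul_self (s := 1) (by norm_num) one_ne_zero hβ0 hβ1

theorem integrable_exp_neg_mul_norm_rpow {E : Type*} [NormedAddCommGroup E] [NormedSpace ℝ E]
    [FiniteDimensional ℝ E] [MeasurableSpace E] [BorelSpace E] (μ : Measure E)
    [μ.IsAddHaarMeasure] {b p : ℝ} (hb : 0 < b) (hp : 0 < p) :
    Integrable (fun x : E => exp (-b * ‖x‖ ^ p)) μ := by
  rcases subsingleton_or_nontrivial E with hE | hE
  · exact Continuous.integrable_of_hasCompactSupport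
      (by fun_prop (disch := exact hp.le)) (.of_compactSpace _)
  · rw [integrable_fun_norm_addHaar μ (f := fun r => exp (-b * r ^ p))]
    refine (integrableOn_rpow_mul_exp_neg_mul_rpow (s := (Module.finrank ℝ E - 1 : ℕ))
      (neg_one_lt_zero.trans_le (Nat.cast_nonneg _)) hp hb).congr_fun (fun r _ => ?_)
      measurableSet_Ioi
    simp only [rpow_natCast, smul_eq_mul]

theorem exp_neg_mul_rpow_mul_exp_neg_mul_rpow_le {β c X a b : ℝ} (hβ0 : 0 ≤ β) (hβ1 : β ≤ 1)
    (hc : 0 ≤ c) (hX : 0 ≤ X) (ha : X / 2 ≤ a) (hb : X / 2 ≤ b) (hab : X ≤ a + b) :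
    exp (-c * a ^ β) * exp (-c * b ^ β) ≤
      (exp (-(c * (1 + β - 2 ^ β)) * a ^ β) + exp (-(c * (1 + β - 2 ^ β)) * b ^ β)) *
        (exp (-c * (1 - β) * (X / 2) ^ β) * exp (-c * X ^ β)) := by
  set k := c * (1 + β - 2 ^ β)
  have hexponent : X ^ β + (1 - β) * (X / 2) ^ β + (1 + β - 2 ^ β) * min a b ^ β ≤
      a ^ β + b ^ β := by
    have hmin : (X / 2) ^ β ≤ min a b ^ β := rpow_le_rpow (by linarith) (le_min ha hb) hβ0
    have := add_rpow_add_mul_min_rpow_le hβ0 hβ1 (by linarith : 0 ≤ a) (by linarith : 0 ≤ b)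
    have := rpow_le_rpow hX hab hβ0
    nlinarith
  have hexp_min : exp (-k * min a b ^ β) ≤ exp (-k * a ^ β) + exp (-k * b ^ β) := by
    rcases min_choice a b with h | h <;> rw [h] <;> simp [exp_nonneg]
  calc exp (-c * a ^ β) * exp (-c * b ^ β)
      ≤ exp (-k * min a b ^ β) * (exp (-c * (1 - β) * (X / 2) ^ β) * exp (-c * X ^ β)) := by
        simp only [← exp_add, exp_le_exp, k]
        nlinarith [mul_le_mul_of_nonneg_left hexponent hc]
    _ ≤ _ := by gcongr

theorem rpow_neg_mul_rpow_neg_le {δ X a b : ℝ} (hδ : 0 ≤ δ) (hX : 2 ≤ X) (ha : X / 2 ≤ a)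
    (hb : X / 2 ≤ b) : a ^ (-δ) * b ^ (-δ) ≤ 2 ^ δ * X ^ (-δ) := by
  have hX2 : 0 < X / 2 := by linarith
  calc a ^ (-δ) * b ^ (-δ) ≤ (X / 2) ^ (-δ) * 1 := by
        apply mul_le_mul (rpow_le_rpow_of_nonpos hX2 ha (neg_nonpos.2 hδ))
          (rpow_le_one_of_one_le_of_nonpos (by linarith) (neg_nonpos.2 hδ))
          (rpow_nonneg (by linarith) _) (by positivity)
    _ = 2 ^ δ * X ^ (-δ) := by
        rw [mul_one, div_rpow (by linarith) zero_le_two, rpow_neg zero_le_two, div_inv_eq_mul,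
          mul_comm]

noncomputable def subExpProfile (c β δ r : ℝ) : ℝ := exp (-c * r ^ β) * r ^ (-δ)

theorem subExpProfile_mul_subExpProfile_le {β c δ X a b : ℝ} (hβ0 : 0 ≤ β) (hβ1 : β ≤ 1)
    (hc : 0 ≤ c) (hδ : 0 ≤ δ) (hX : 2 ≤ X) (ha : X / 2 ≤ a) (hb : X / 2 ≤ b)
    (hab : X ≤ a + b) :
    subExpProfile c β δ a * subExpProfile c β δ b ≤
      2 ^ δ * (exp (-(c * (1 + β - 2 ^ β)) * a ^ β) + exp (-(c * (1 + β - 2 ^ β)) * b ^ β)) *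
        (exp (-c * (1 - β) * (X / 2) ^ β) * subExpProfile c β δ X) := by
  calc subExpProfile c β δ a * subExpProfile c β δ b
      = (exp (-c * a ^ β) * exp (-c * b ^ β)) * (a ^ (-δ) * b ^ (-δ)) := by
        simp only [subExpProfile]; ring
    _ ≤ ((exp (-(c * (1 + β - 2 ^ β)) * a ^ β) + exp (-(c * (1 + β - 2 ^ β)) * b ^ β)) *
          (exp (-c * (1 - β) * (X / 2) ^ β) * exp (-c * X ^ β))) * (2 ^ δ * X ^ (-δ)) :=
        mul_le_mul
          (exp_neg_mul_rpow_mul_exp_neg_mul_rpow_le hβ0 hβ1 hc (by linarith) ha hb hab)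
          (rpow_neg_mul_rpow_neg_le hδ hX ha hb)
          (mul_nonneg (rpow_nonneg (by linarith) _) (rpow_nonneg (by linarith) _)) (by positivity)
    _ = _ := by simp only [subExpProfile]; ring

theorem stmt10 (d : ℕ) (β c δ : ℝ) (hβ0 : 0 < β) (hβ1 : β < 1) (hc : 0 < c)
    (hδ : 0 ≤ δ) :
    ∃ c₁ > 0, ∀ x : EuclideanSpace ℝ (Fin d), 2 ≤ ‖x‖ →
      (∫ y in {y : EuclideanSpace ℝ (Fin d) | ‖x‖ / 2 < ‖y‖ ∧ ‖x‖ / 2 < ‖x - y‖},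
          (Real.exp (-c * ‖x - y‖ ^ β) * ‖x - y‖ ^ (-δ)) *
            (Real.exp (-c * ‖y‖ ^ β) * ‖y‖ ^ (-δ))) ≤
        c₁ * Real.exp (-c * (1 - β) * (‖x‖ / 2) ^ β) *
          (Real.exp (-c * ‖x‖ ^ β) * ‖x‖ ^ (-δ)) := by
  set k := c * (1 + β - 2 ^ β)
  set E := fun y : EuclideanSpace ℝ (Fin d) => exp (-k * ‖y‖ ^ β)
  have hE : Integrable E :=
    integrable_exp_neg_mul_norm_rpow volume (mul_pos hc (sub_pos.2 (two_rpow_lt_one_add hβ0 hβ1)))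
      hβ0
  refine ⟨2 ^ δ * (2 * ∫ y, E y) + 1, by positivity, fun x hx => ?_⟩
  set K := exp (-c * (1 - β) * (‖x‖ / 2) ^ β) * subExpProfile c β δ ‖x‖
  have hK : 0 ≤ K := by unfold K subExpProfile; positivity
  have hdom_nonneg : ∀ y, 0 ≤ 2 ^ δ * (E (x - y) + E y) * K := fun y =>
    mul_nonneg (mul_nonneg (by positivity) (add_nonneg (exp_nonneg _) (exp_nonneg _))) hK
  have hdom : Integrable fun y => 2 ^ δ * (E (x - y) + E y) * K :=
    (((hE.comp_sub_left x).add hE).const_mul _).mul_const _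
  set S := {y : EuclideanSpace ℝ (Fin d) | ‖x‖ / 2 < ‖y‖ ∧ ‖x‖ / 2 < ‖x - y‖}
  have hS : MeasurableSet S := by measurability
  calc ∫ y in S, subExpProfile c β δ ‖x - y‖ * subExpProfile c β δ ‖y‖
      ≤ ∫ y in S, 2 ^ δ * (E (x - y) + E y) * K :=
        integral_mono_of_nonneg (.of_forall fun y => by unfold subExpProfile; positivity)
          hdom.restrict
          (ae_restrict_of_forall_mem hS fun y ⟨hy, hxy⟩ =>
            subExpProfile_mul_subExpProfile_le hβ0.le hβ1.le hc.le hδ hx hxy.le hy.le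
              (by simpa using norm_add_le (x - y) y))
    _ ≤ ∫ y, 2 ^ δ * (E (x - y) + E y) * K :=
        setIntegral_le_integral hdom (.of_forall hdom_nonneg)
    _ = 2 ^ δ * (2 * ∫ y, E y) * K := by
        rw [integral_mul_const, integral_const_mul, integral_add (hE.comp_sub_left x) hE,
          integral_sub_left_eq_self, two_mul]
    _ ≤ (2 ^ δ * (2 * ∫ y, E y) + 1) * K := by gcongr; exact le_add_of_nonneg_right zero_le_one
    _ = _ := by simp only [K, subExpProfile]; ring
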